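/- Let H be a complex Hilbert space with dim H = 4. If X, Y are non-compatible adjacent 2-dimensional subspaces of H, then there are precisely two 2-dimensional subspaces of H ortho-adjacent to both X and Y, namely the sum of X ∩ Y and (X + Y)^⊥ and the orthogonal complement of X ∩ Y in X + Y, and these two subspaces are orthogonal to each other. -/

import Mathlib

noncomputable section

open scoped Classical

variable {H : Type*} [NormedAddCommGroup H] [InnerProductSpace ℂ H] [CompleteSpace H]

/-- The orthogonal projection onto `X`, as an operator `H → H` (junk value `0` if the
orthogonal projection onto `X` does not exist; it always exists for finite-dimensional,
and more generally complete, subspaces). -/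
noncomputable def projOn (X : Submodule ℂ H) : H →L[ℂ] H :=
  if h : X.HasOrthogonalProjection then
    haveI := h
    X.subtypeL.comp X.orthogonalProjectionOnto
  else 0

/-- Two subspaces of `H` are compatible if their orthogonal projections commute. -/
def Compatible (X Y : Submodule ℂ H) : Prop :=
  projOn X * projOn Y = projOn Y * projOn X

/-- `X` is a `k`-dimensional subspace of `H`. -/
def IsDim (k : ℕ) (X : Submodule ℂ H) : Prop :=
  FiniteDimensional ℂ X ∧ Module.finrank ℂ X = k

/-- Two (distinct) `k`-dimensional subspaces are adjacent if their intersection is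
`(k-1)`-dimensional. -/
def AdjacentSub (k : ℕ) (X Y : Submodule ℂ H) : Prop :=
  X ≠ Y ∧ Module.finrank ℂ ↥(X ⊓ Y) = k - 1

/-- Ortho-adjacency: adjacent and compatible. -/
def OrthoAdjacent (k : ℕ) (X Y : Submodule ℂ H) : Prop :=
  AdjacentSub k X Y ∧ Compatible X Y

/-- The ortho-Grassmann graph `Γ⊥_k(H)` on the `k`-dimensional subspaces of `H`:
two `k`-dimensional subspaces are connected by an edge if they are ortho-adjacent. -/
def orthoGrassmannGraph (H : Type*) [NormedAddCommGroup H] [InnerProductSpace ℂ H]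
    [CompleteSpace H] (k : ℕ) : SimpleGraph {X : Submodule ℂ H // IsDim k X} where
  Adj X Y := OrthoAdjacent k X.1 Y.1
  symm := ⟨by
    rintro X Y ⟨⟨hne, hdim⟩, hc⟩
    refine ⟨⟨hne.symm, by rwa [inf_comm]⟩, ?_⟩
    unfold Compatible at hc ⊢
    exact hc.symm⟩
  loopless := ⟨fun X h => h.1.1 rfl⟩

/-- The Grassmann graph `Γ_k(H)` on the `k`-dimensional subspaces of `H`:
two `k`-dimensional subspaces are connected by an edge if they are adjacent. -/
def grassmannGraph (H : Type*) [NormedAddCommGroup H] [InnerProductSpace ℂ H]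
    [CompleteSpace H] (k : ℕ) : SimpleGraph {X : Submodule ℂ H // IsDim k X} where
  Adj X Y := AdjacentSub k X.1 Y.1
  symm := ⟨by
    rintro X Y ⟨hne, hdim⟩
    exact ⟨hne.symm, by rwa [inf_comm]⟩⟩
  loopless := ⟨fun X h => h.1 rfl⟩

/-! Write `L = X ⊓ Y`, `M = X ⊔ Y` and `Z₁ = L ⊔ Mᗮ`; the second candidate `M ⊓ Lᗮ` is `Z₁ᗮ`.
Since orthogonal projections are symmetric, `Z` is compatible with `W` iff `P_Z` preserves `W`,
i.e. iff `W = (Z ⊓ W) ⊕ (Zᗮ ⊓ W)`; hence `dim (Z ⊓ W) + dim (Zᗮ ⊓ W) = dim W`, and a plane that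
is ortho-adjacent to a plane `W` has an orthogonal complement that is ortho-adjacent to `W` too.
A plane `Z` meeting `X` and `Y` in lines either contains `L` (if the two lines coincide) or lies
in `M` (if they span `Z`). Applying this to both `Z` and `Zᗮ`: they cannot both contain `L`,
nor both lie in the hyperplane `M`, so one of them contains `L` and `Mᗮ`, i.e. equals `Z₁`. -/

open Module Submodule

section LinearAlgebra

variable {K V : Type*} [DivisionRing K] [AddCommGroup V] [Module K V]

theorem finrank_sup_of_disjoint {U W : Submodule K V} [FiniteDimensional K U]
    [FiniteDimensional K W] (h : Disjoint U W) :
    finrank K ↥(U ⊔ W) = finrank K U + finrank K W := by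
  rw [← Submodule.finrank_sup_add_finrank_inf_eq, h.eq_bot, finrank_bot, add_zero]

theorem le_or_le_sup_of_finrank_inf_eq_one {X Y Z : Submodule K V} [FiniteDimensional K Z]
    (hZ : finrank K Z = 2) (hZX : finrank K ↥(Z ⊓ X) = 1) (hZY : finrank K ↥(Z ⊓ Y) = 1)
    (hXY : finrank K ↥(X ⊓ Y) = 1) :
    X ⊓ Y ≤ Z ∨ Z ≤ X ⊔ Y := by
  by_cases hZXY : Z ⊓ X ≤ Y
  · have : FiniteDimensional K ↥(X ⊓ Y) := Module.finite_of_finrank_eq_succ hXY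
    have hL : Z ⊓ X = X ⊓ Y :=
      eq_of_le_of_finrank_eq (le_inf inf_le_right hZXY) (hZX.trans hXY.symm)
    exact Or.inl (hL ▸ inf_le_left)
  · have hlt : Z ⊓ Y < Z ⊓ X ⊔ Z ⊓ Y :=
      lt_of_le_of_ne le_sup_right fun h => hZXY ((le_sup_left.trans h.ge).trans inf_le_right)
    have hsup_le : Z ⊓ X ⊔ Z ⊓ Y ≤ Z := sup_le inf_le_left inf_le_left
    have hsup : Z ⊓ X ⊔ Z ⊓ Y = Z := by
      refine eq_of_le_of_finrank_eq hsup_le (le_antisymm (finrank_mono hsup_le) ?_)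
      have := Submodule.finrank_lt_finrank_of_lt hlt
      omega
    exact Or.inr (hsup ▸ sup_le_sup inf_le_right inf_le_right)

end LinearAlgebra

section Compatibility

variable {E : Type*} [NormedAddCommGroup E] [InnerProductSpace ℂ E] {Z W : Submodule ℂ E}

theorem projOn_eq_starProjection (X : Submodule ℂ E) [X.HasOrthogonalProjection] :
    projOn X = X.starProjection := by
  rw [projOn, dif_pos ‹_›]
  rfl

theorem compatible_iff_mem_invtSubmodule [Z.HasOrthogonalProjection]
    [W.HasOrthogonalProjection] :
    Compatible Z W ↔ W ∈ Module.End.invtSubmodule (Z.starProjection : E →ₗ[ℂ] E) := by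
  rw [Compatible, projOn_eq_starProjection, projOn_eq_starProjection]
  change Commute _ _ ↔ _
  rw [Commute.symm_iff,
    ContinuousLinearMap.IsIdempotentElem.commute_iff W.isIdempotentElem_starProjection,
    range_starProjection, ker_starProjection, and_iff_left_iff_imp]
  exact Z.starProjection_isSymmetric.orthogonalComplement_mem_invtSubmodule

theorem mem_invtSubmodule_starProjection_iff [Z.HasOrthogonalProjection] :
    W ∈ Module.End.invtSubmodule (Z.starProjection : E →ₗ[ℂ] E) ↔ W ≤ Z ⊓ W ⊔ Zᗮ ⊓ W := by
  rw [Module.End.mem_invtSubmodule]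
  constructor
  · intro h w hw
    have hPw : Z.starProjection w ∈ W := h hw
    rw [← add_sub_cancel (Z.starProjection w) w]
    exact add_mem_sup ⟨starProjection_apply_mem _ _, hPw⟩
      ⟨sub_starProjection_mem_orthogonal w, W.sub_mem hw hPw⟩
  · intro h w hw
    obtain ⟨a, ha, b, hb, rfl⟩ := mem_sup.mp (h hw)
    rw [mem_comap, ContinuousLinearMap.coe_coe, map_add, starProjection_eq_self_iff.mpr ha.1,
      (starProjection_apply_eq_zero_iff Z).mpr hb.1, add_zero]
    exact ha.2

theorem compatible_iff_le_sup_inf [Z.HasOrthogonalProjection] [W.HasOrthogonalProjection] :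
    Compatible Z W ↔ W ≤ Z ⊓ W ⊔ Zᗮ ⊓ W :=
  compatible_iff_mem_invtSubmodule.trans mem_invtSubmodule_starProjection_iff

theorem Compatible.orthogonal_left [Z.HasOrthogonalProjection] (h : Compatible Z W) :
    Compatible Zᗮ W := by
  unfold Compatible at *
  rw [projOn_eq_starProjection Zᗮ, starProjection_orthogonal', ← projOn_eq_starProjection,
    sub_mul, mul_sub, one_mul, mul_one, h]

theorem Compatible.finrank_inf_add_finrank_orthogonal_inf [Z.HasOrthogonalProjection]
    [FiniteDimensional ℂ W] (h : Compatible Z W) :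
    finrank ℂ ↥(Z ⊓ W) + finrank ℂ ↥(Zᗮ ⊓ W) = finrank ℂ W := by
  rw [← finrank_sup_of_disjoint (Z.orthogonal_disjoint.mono inf_le_left inf_le_left),
    le_antisymm (sup_le inf_le_right inf_le_right) (compatible_iff_le_sup_inf.mp h)]

theorem orthoAdjacent_two_iff (hW : finrank ℂ W = 2) :
    OrthoAdjacent 2 Z W ↔ finrank ℂ ↥(Z ⊓ W) = 1 ∧ Compatible Z W := by
  refine ⟨fun h => ⟨h.1.2, h.2⟩, fun ⟨h1, h⟩ => ⟨⟨?_, h1⟩, h⟩⟩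
  rintro rfl
  rw [inf_idem, hW] at h1
  omega

theorem OrthoAdjacent.orthogonal_left [Z.HasOrthogonalProjection] [FiniteDimensional ℂ W]
    (hW : finrank ℂ W = 2) (h : OrthoAdjacent 2 Z W) : OrthoAdjacent 2 Zᗮ W := by
  rw [orthoAdjacent_two_iff hW] at h ⊢
  have := h.2.finrank_inf_add_finrank_orthogonal_inf
  exact ⟨by omega, h.2.orthogonal_left⟩

theorem ne_orthogonal_self (hZ : Z ≠ ⊥) : Z ≠ Zᗮ :=
  fun h => hZ (by simpa [← h] using Z.inf_orthogonal_eq_bot)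

end Compatibility

section FiniteDimensional

variable {E : Type*} [NormedAddCommGroup E] [InnerProductSpace ℂ E] [FiniteDimensional ℂ E]

theorem orthoAdjacent_sup_orthogonal {L W M : Submodule ℂ E} (hLW : L ≤ W) (hWM : W ≤ M)
    (hL : finrank ℂ L = 1) (hW : finrank ℂ W = 2) : OrthoAdjacent 2 (L ⊔ Mᗮ) W := by
  have hinf : (L ⊔ Mᗮ) ⊓ W = L := by
    rw [sup_inf_assoc_of_le _ hLW, (M.orthogonal_disjoint.symm.mono_right hWM).eq_bot, sup_bot_eq]
  refine (orthoAdjacent_two_iff hW).2 ⟨hinf.symm ▸ hL, compatible_iff_le_sup_inf.2 ?_⟩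
  rw [hinf, ← inf_orthogonal, orthogonal_orthogonal]
  calc W = L ⊔ Lᗮ ⊓ W := (sup_orthogonal_inf_of_hasOrthogonalProjection hLW).symm
    _ ≤ L ⊔ Lᗮ ⊓ M ⊓ W := sup_le_sup_left (le_inf (inf_le_inf_left _ hWM) inf_le_right) _

variable {X Y : Submodule ℂ E}

theorem finrank_inf_sup_orthogonal_sup (hE : finrank ℂ E = 4) (hX : finrank ℂ X = 2)
    (hY : finrank ℂ Y = 2) (hXY : finrank ℂ ↥(X ⊓ Y) = 1) :
    finrank ℂ ↥(X ⊓ Y ⊔ (X ⊔ Y)ᗮ) = 2 := by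
  have hM := finrank_sup_add_finrank_inf_eq X Y
  have hMc := (X ⊔ Y).finrank_add_finrank_orthogonal
  rw [finrank_sup_of_disjoint ((X ⊔ Y).orthogonal_disjoint.mono_left
    (inf_le_left.trans le_sup_left))]
  omega

theorem eq_or_eq_orthogonal_of_orthoAdjacent (hE : finrank ℂ E = 4) (hX : finrank ℂ X = 2)
    (hY : finrank ℂ Y = 2) (hXY : finrank ℂ ↥(X ⊓ Y) = 1) {Z : Submodule ℂ E}
    (hZ : finrank ℂ Z = 2) (hZX : OrthoAdjacent 2 Z X) (hZY : OrthoAdjacent 2 Z Y) :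
    Z = X ⊓ Y ⊔ (X ⊔ Y)ᗮ ∨ Z = (X ⊓ Y ⊔ (X ⊔ Y)ᗮ)ᗮ := by
  have hZc : finrank ℂ Zᗮ = 2 := by
    have := Z.finrank_add_finrank_orthogonal
    omega
  have hM : X ⊔ Y ≠ ⊤ := by
    intro h
    have := finrank_sup_add_finrank_inf_eq X Y
    rw [h, finrank_top] at this
    omega
  have hdich : ∀ Z' : Submodule ℂ E, finrank ℂ Z' = 2 → OrthoAdjacent 2 Z' X →
      OrthoAdjacent 2 Z' Y → X ⊓ Y ≤ Z' ∨ Z' ≤ X ⊔ Y := fun Z' hZ' hZ'X hZ'Y =>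
    le_or_le_sup_of_finrank_inf_eq_one hZ' hZ'X.1.2 hZ'Y.1.2 hXY
  have heq : ∀ Z' : Submodule ℂ E, finrank ℂ Z' = 2 → X ⊓ Y ≤ Z' → Z'ᗮ ≤ X ⊔ Y →
      Z' = X ⊓ Y ⊔ (X ⊔ Y)ᗮ := fun Z' hZ' hLZ hZM =>
    (eq_of_le_of_finrank_eq (sup_le hLZ (by simpa using orthogonal_le hZM))
      ((finrank_inf_sup_orthogonal_sup hE hX hY hXY).trans hZ'.symm)).symm
  rcases hdich Z hZ hZX hZY with hLZ | hZM <;>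
    rcases hdich Zᗮ hZc (hZX.orthogonal_left hX) (hZY.orthogonal_left hY) with hLZ' | hZM'
  · have hL : X ⊓ Y = ⊥ := le_bot_iff.mp (Z.inf_orthogonal_eq_bot ▸ le_inf hLZ hLZ')
    rw [hL, finrank_bot] at hXY
    omega
  · exact Or.inl (heq Z hZ hLZ hZM')
  · exact Or.inr (by rw [← heq Zᗮ hZc hLZ' (by simpa using hZM), orthogonal_orthogonal])
  · exact absurd (top_le_iff.mp (sup_orthogonal_of_hasOrthogonalProjection (K := Z) ▸
      sup_le hZM hZM')) hM

end FiniteDimensional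

theorem common_neighbours_of_dim_four_general
    (hH : Module.rank ℂ H = 4)
    (X Y : Submodule ℂ H) (hX : IsDim 2 X) (hY : IsDim 2 Y)
    (hadj : AdjacentSub 2 X Y) :
    {Z : Submodule ℂ H | IsDim 2 Z ∧ OrthoAdjacent 2 Z X ∧ OrthoAdjacent 2 Z Y} =
      {(X ⊓ Y) ⊔ (X ⊔ Y)ᗮ, (X ⊔ Y) ⊓ (X ⊓ Y)ᗮ} ∧
    (X ⊓ Y) ⊔ (X ⊔ Y)ᗮ ≠ (X ⊔ Y) ⊓ (X ⊓ Y)ᗮ ∧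
    ((X ⊓ Y) ⊔ (X ⊔ Y)ᗮ) ⟂ ((X ⊔ Y) ⊓ (X ⊓ Y)ᗮ) := by
  have : FiniteDimensional ℂ H := Module.finite_of_rank_eq_nat hH
  have hH4 : finrank ℂ H = 4 := finrank_eq_of_rank_eq hH
  have hXY : finrank ℂ ↥(X ⊓ Y) = 1 := hadj.2
  have hZ₁ := finrank_inf_sup_orthogonal_sup hH4 hX.2 hY.2 hXY
  have hZ₂ : finrank ℂ ↥(X ⊓ Y ⊔ (X ⊔ Y)ᗮ)ᗮ = 2 := by
    have := (X ⊓ Y ⊔ (X ⊔ Y)ᗮ).finrank_add_finrank_orthogonal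
    omega
  have hZ₂_eq : (X ⊔ Y) ⊓ (X ⊓ Y)ᗮ = (X ⊓ Y ⊔ (X ⊔ Y)ᗮ)ᗮ := by
    rw [← inf_orthogonal, orthogonal_orthogonal, inf_comm]
  rw [hZ₂_eq]
  refine ⟨Set.ext fun Z => ⟨fun ⟨hZ, hZX, hZY⟩ => ?_, ?_⟩, ?_, isOrtho_orthogonal_right _⟩
  · exact eq_or_eq_orthogonal_of_orthoAdjacent hH4 hX.2 hY.2 hXY hZ.2 hZX hZY
  · rintro (rfl | rfl)
    · exact ⟨⟨inferInstance, hZ₁⟩, orthoAdjacent_sup_orthogonal inf_le_left le_sup_left hXY hX.2,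
        orthoAdjacent_sup_orthogonal inf_le_right le_sup_right hXY hY.2⟩
    · exact ⟨⟨inferInstance, hZ₂⟩,
        (orthoAdjacent_sup_orthogonal inf_le_left le_sup_left hXY hX.2).orthogonal_left hX.2,
        (orthoAdjacent_sup_orthogonal inf_le_right le_sup_right hXY hY.2).orthogonal_left hY.2⟩
  · refine ne_orthogonal_self fun h => ?_
    rw [h, finrank_bot] at hZ₁
    omega

/-- Suppose `dim H = 4`. If `X, Y` are non-compatible adjacent `2`-dimensional subspaces of
`H`, then there are precisely two `2`-dimensional subspaces of `H` ortho-adjacent to both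
`X, Y`, namely `(X ∩ Y) + (X + Y)ᗮ` and the orthogonal complement of `X ∩ Y` in `X + Y`,
and these two subspaces are orthogonal to each other. -/
theorem common_neighbours_of_dim_four
    (hH : Module.rank ℂ H = 4)
    (X Y : Submodule ℂ H) (hX : IsDim 2 X) (hY : IsDim 2 Y)
    (hadj : AdjacentSub 2 X Y) (hnc : ¬ Compatible X Y) :
    {Z : Submodule ℂ H | IsDim 2 Z ∧ OrthoAdjacent 2 Z X ∧ OrthoAdjacent 2 Z Y} =
      {(X ⊓ Y) ⊔ (X ⊔ Y)ᗮ, (X ⊔ Y) ⊓ (X ⊓ Y)ᗮ} ∧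
    (X ⊓ Y) ⊔ (X ⊔ Y)ᗮ ≠ (X ⊔ Y) ⊓ (X ⊓ Y)ᗮ ∧
    ((X ⊓ Y) ⊔ (X ⊔ Y)ᗮ) ⟂ ((X ⊔ Y) ⊓ (X ⊓ Y)ᗮ) :=
  common_neighbours_of_dim_four_general hH X Y hX hY hadj

end
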